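/- arXiv:1911.08197 — 6 statements merged into one kernel-verified Lean document; each statement's English description precedes it below -/
import Mathlib

section
/- (Query complexity upper bound for top-m estimation, Theorem 7.) Fix 1 ≤ m < k and let T_m* = max over i ∈ {1,…,m} and j ∈ {m+1,…,k} of (592/3) · (p_i/(p_i−p_j)²) · log( (592/3) · sqrt(k/δ) · p_i/(p_i−p_j)² ). Then with probability at least 1 − δ, for every time t ≥ T_m* one has p̂_i^t − β_i^t > p̂_j^t + β_j^t simultaneously for all i ∈ {1,…,m} and all j ∈ {m+1,…,k}; in particular, the top-m stopping rule (m bins whose lower confidence bounds exceed the upper confidence bounds of all remaining bins) fires on the true top-m set within T_m* samples. -/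
open MeasureTheory ProbabilityTheory

/-- Indicator `Z^i_t = 1 {X t = i}`, empirical frequency
`p̂_i^t = (1/t) Σ_{j<t} Z^i_j` (samples indexed from `0`). -/
noncomputable def empFreq {Ω : Type*} {k : ℕ} (X : ℕ → Ω → Fin k) (i : Fin k) (t : ℕ)
    (ω : Ω) : ℝ :=
  (∑ j ∈ Finset.range t, if X j ω = i then (1 : ℝ) else 0) / (t : ℝ)

/-- Empirical variance `V_t(Z^i) = (1/(t(t−1))) Σ_{p<q<t} (Z^i_p − Z^i_q)²`. -/
noncomputable def empVar {Ω : Type*} {k : ℕ} (X : ℕ → Ω → Fin k) (i : Fin k) (t : ℕ)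
    (ω : Ω) : ℝ :=
  (∑ q ∈ Finset.range t, ∑ p ∈ Finset.range q,
      ((if X p ω = i then (1 : ℝ) else 0) - (if X q ω = i then (1 : ℝ) else 0)) ^ 2) /
    ((t : ℝ) * ((t : ℝ) - 1))

/-- Confidence radius
`β_i^t = sqrt(2 V_t(Z^i) log(4kt²/δ)/t) + 7 log(4kt²/δ)/(3(t−1))`. -/
noncomputable def confRadius {Ω : Type*} {k : ℕ} (δ : ℝ) (X : ℕ → Ω → Fin k) (i : Fin k)
    (t : ℕ) (ω : Ω) : ℝ :=
  Real.sqrt (2 * empVar X i t ω * Real.log (4 * (k : ℝ) * (t : ℝ) ^ 2 / δ) / (t : ℝ)) +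
    7 * Real.log (4 * (k : ℝ) * (t : ℝ) ^ 2 / δ) / (3 * ((t : ℝ) - 1))

open Real Finset

/-!
Each indicator sum `∑_{n<t} 1{X_n = i}` is a sum of independent Bernoulli(`p_i`) variables,
whose centred moment generating function is at most `exp (3/4 · t p_i λ²)` for `|λ| ≤ 1`.
Chernoff's bound then gives Bernstein's inequality `|p̂_i^t - p_i| < √(3 p_i L / t) + 2 L / t`
outside an event of probability `2 e^{-L}`. With `L = log (4 k t² / δ)` this is `δ / (2 k t²)`,
and a union bound over the `k` bins and all times `t ≥ 1` costs `δ π² / 12 ≤ δ`.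

On the remaining event the argument is deterministic. The empirical variance of a 0/1 sequence is
at most its empirical mean, and once `t ≥ T_m*` we have `p_i L ≤ (183 / 11840) t Δ²` with
`Δ = p_i - p_j`; this makes both deviations at most `Δ / 4` and both radii at most
`6 Δ / 25`, so the two confidence intervals are disjoint.
-/

lemma exp_le_one_add_add_sq_of_abs_le_one {x : ℝ} (hx : |x| ≤ 1) :
    exp x ≤ 1 + x + 3 / 4 * x ^ 2 := by
  have h := (abs_sub_le_iff.1 (Real.exp_bound hx (n := 2) two_pos)).1
  norm_num [Finset.sum_range_succ, sq_abs] at h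
  linarith

lemma exists_neg_mul_add_mul_sq_le {c L : ℝ} (hc : 0 ≤ c) (hL : 0 < L) :
    ∃ l, 0 ≤ l ∧ l ≤ 1 ∧ -l * (√(4 * c * L) + 2 * L) + c * l ^ 2 ≤ -L := by
  set s := √(4 * c * L) + 2 * L
  have hs : 4 * c * L ≤ (s - 2 * L) ^ 2 := by
    rw [add_sub_cancel_right, Real.sq_sqrt (by positivity)]
  have hsL : 2 * L ≤ s := le_add_of_nonneg_left (Real.sqrt_nonneg _)
  rcases le_or_gt s (2 * c) with hsc | hcs
  · -- the unconstrained minimiser `s / (2c)` of `-l s + c l²` is admissible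
    have hc0 : 0 < c := by linarith
    refine ⟨s / (2 * c), by positivity, (div_le_one (by positivity)).2 hsc, ?_⟩
    have key : -(s / (2 * c)) * s + c * (s / (2 * c)) ^ 2 = -(s ^ 2 / (4 * c)) := by
      field_simp; ring
    rw [key, neg_le_neg_iff, le_div_iff₀ (by positivity)]
    nlinarith
  · exact ⟨1, zero_le_one, le_rfl, by linarith⟩

section Chernoff

variable {Ω : Type*} [MeasurableSpace Ω] {μ : Measure Ω} [IsProbabilityMeasure μ]

lemma integrable_exp_mul_of_abs_le {Y : Ω → ℝ} (hY : Measurable Y) {C : ℝ}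
    (hC : ∀ ω, |Y ω| ≤ C) (l : ℝ) :
    Integrable (fun ω => exp (l * Y ω)) μ := by
  refine Integrable.of_bound (hY.const_mul l).exp.aestronglyMeasurable (exp (|l| * C))
    (ae_of_all _ fun ω => ?_)
  rw [Real.norm_eq_abs, abs_of_pos (exp_pos _), exp_le_exp]
  calc l * Y ω ≤ |l| * |Y ω| := by rw [← abs_mul]; exact le_abs_self _
    _ ≤ |l| * C := by gcongr; exact hC ω

lemma mgf_eq_of_bernoulli {Z : Ω → ℝ} (hZ : Measurable Z) (h01 : ∀ ω, Z ω = 0 ∨ Z ω = 1)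
    (l : ℝ) : mgf Z μ l = 1 + μ[Z] * (exp l - 1) := by
  have hexp : (fun ω => exp (l * Z ω)) = fun ω => 1 + (exp l - 1) * Z ω := by
    funext ω; rcases h01 ω with h | h <;> simp [h]
  have hint : Integrable Z μ := Integrable.of_bound hZ.aestronglyMeasurable 1
    (ae_of_all _ fun ω => by rcases h01 ω with h | h <;> simp [h])
  rw [mgf, hexp, integral_add (integrable_const 1) (hint.const_mul _), integral_const_mul]
  simp [mul_comm]

lemma mgf_le_of_bernoulli {Z : Ω → ℝ} (hZ : Measurable Z) (h01 : ∀ ω, Z ω = 0 ∨ Z ω = 1)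
    {l : ℝ} (hl : |l| ≤ 1) : mgf Z μ l ≤ exp (μ[Z] * (l + 3 / 4 * l ^ 2)) := by
  have hmean : 0 ≤ μ[Z] := integral_nonneg fun ω => by rcases h01 ω with h | h <;> simp [h]
  calc mgf Z μ l = 1 + μ[Z] * (exp l - 1) := mgf_eq_of_bernoulli hZ h01 l
    _ ≤ 1 + μ[Z] * (l + 3 / 4 * l ^ 2) := by
      gcongr; linarith [exp_le_one_add_add_sq_of_abs_le_one hl]
    _ ≤ exp (μ[Z] * (l + 3 / 4 * l ^ 2)) := by
      linarith [add_one_le_exp (μ[Z] * (l + 3 / 4 * l ^ 2))]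

lemma mgf_sum_sub_le_of_bernoulli {Z : ℕ → Ω → ℝ} (hZ : ∀ j, Measurable (Z j))
    (h01 : ∀ j ω, Z j ω = 0 ∨ Z j ω = 1) (hindep : iIndepFun Z μ) {q : ℝ}
    (hmean : ∀ j, μ[Z j] = q) (t : ℕ) {l : ℝ} (hl : |l| ≤ 1) :
    mgf (fun ω => ∑ j ∈ range t, Z j ω - t * q) μ l ≤ exp (3 / 4 * t * q * l ^ 2) := by
  have hsum : (fun ω => ∑ j ∈ range t, Z j ω) = ∑ j ∈ range t, Z j := by
    funext ω; simp
  simp_rw [sub_eq_add_neg]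
  rw [mgf_add_const, hsum, hindep.mgf_sum hZ]
  calc (∏ j ∈ range t, mgf (Z j) μ l) * exp (l * -(t * q))
      ≤ (∏ _j ∈ range t, exp (q * (l + 3 / 4 * l ^ 2))) * exp (l * -(t * q)) := by
        gcongr with j
        · exact fun j _ => mgf_nonneg
        · simpa [hmean j] using mgf_le_of_bernoulli (μ := μ) (hZ j) (h01 j) hl
    _ = exp (3 / 4 * t * q * l ^ 2) := by
        rw [prod_const, card_range, ← exp_nat_mul, ← exp_add]; ring_nf

lemma measureReal_le_abs_le_of_mgf_le {Y : Ω → ℝ} {c : ℝ}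
    (hint : ∀ l, Integrable (fun ω => exp (l * Y ω)) μ)
    (hmgf : ∀ l, |l| ≤ 1 → mgf Y μ l ≤ exp (c * l ^ 2)) {l : ℝ} (hl0 : 0 ≤ l) (hl1 : l ≤ 1)
    (s : ℝ) : μ.real {ω | s ≤ |Y ω|} ≤ 2 * exp (-l * s + c * l ^ 2) := by
  have hsplit : {ω | s ≤ |Y ω|} = {ω | s ≤ Y ω} ∪ {ω | Y ω ≤ -s} := by
    ext ω; simp only [Set.mem_ofPred_eq, Set.mem_union, le_abs']; tauto
  have hupper : μ.real {ω | s ≤ Y ω} ≤ exp (-l * s + c * l ^ 2) := by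
    calc μ.real {ω | s ≤ Y ω} ≤ exp (-l * s) * mgf Y μ l :=
          measure_ge_le_exp_mul_mgf s hl0 (hint l)
      _ ≤ exp (-l * s) * exp (c * l ^ 2) := by
          gcongr; exact hmgf l (abs_le.2 ⟨by linarith, hl1⟩)
      _ = _ := by rw [← exp_add]
  have hlower : μ.real {ω | Y ω ≤ -s} ≤ exp (-l * s + c * l ^ 2) := by
    calc μ.real {ω | Y ω ≤ -s} ≤ exp (-(-l) * -s) * mgf Y μ (-l) :=
          measure_le_le_exp_mul_mgf (-s) (by linarith) (hint (-l))
      _ ≤ exp (-(-l) * -s) * exp (c * (-l) ^ 2) := by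
          gcongr; exact hmgf (-l) (by rw [abs_neg, abs_of_nonneg hl0]; exact hl1)
      _ = _ := by rw [← exp_add]; ring_nf
  rw [hsplit]
  linarith [measureReal_union_le (μ := μ) {ω | s ≤ Y ω} {ω | Y ω ≤ -s}]

lemma measureReal_sqrt_add_le_abs_sum_sub_le {Z : ℕ → Ω → ℝ} (hZ : ∀ j, Measurable (Z j))
    (h01 : ∀ j ω, Z j ω = 0 ∨ Z j ω = 1) (hindep : iIndepFun Z μ) {q : ℝ}
    (hmean : ∀ j, μ[Z j] = q) (t : ℕ) {L : ℝ} (hL : 0 < L) :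
    μ.real {ω | √(3 * t * q * L) + 2 * L ≤ |∑ j ∈ range t, Z j ω - t * q|} ≤ 2 * exp (-L) := by
  have hZ01 : ∀ j ω, 0 ≤ Z j ω ∧ Z j ω ≤ 1 := fun j ω => by
    rcases h01 j ω with h | h <;> simp [h]
  have hq : 0 ≤ q := hmean 0 ▸ integral_nonneg fun ω => (hZ01 0 ω).1
  have hbound : ∀ ω, |∑ j ∈ range t, Z j ω - t * q| ≤ t + t * q := fun ω => by
    have h0 : 0 ≤ ∑ j ∈ range t, Z j ω := sum_nonneg fun j _ => (hZ01 j ω).1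
    have h1 : ∑ j ∈ range t, Z j ω ≤ t := by
      simpa using sum_le_sum fun j (_ : j ∈ range t) => (hZ01 j ω).2
    rw [abs_le]; constructor <;> nlinarith
  obtain ⟨l, hl0, hl1, hl⟩ :=
    exists_neg_mul_add_mul_sq_le (c := 3 / 4 * t * q) (by positivity) hL
  have hint := integrable_exp_mul_of_abs_le (μ := μ)
    ((Finset.measurable_sum _ fun j _ => hZ j).sub_const _) hbound
  have htail := measureReal_le_abs_le_of_mgf_le hint
    (fun l hl => mgf_sum_sub_le_of_bernoulli hZ h01 hindep hmean t hl) hl0 hl1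
    (√(4 * (3 / 4 * t * q) * L) + 2 * L)
  rw [show 4 * (3 / 4 * t * q) * L = 3 * t * q * L by ring] at htail hl
  exact htail.trans (by gcongr)

end Chernoff

lemma sum_sum_sub_sq_le {z : ℕ → ℝ} (hz : ∀ n, 0 ≤ z n ∧ z n ≤ 1) (t : ℕ) :
    ∑ q ∈ range t, ∑ p ∈ range q, (z p - z q) ^ 2 ≤ (t - 1) * ∑ p ∈ range t, z p := by
  induction t with
  | zero => simp
  | succ t ih =>
    have hstep : ∑ p ∈ range t, (z p - z t) ^ 2 ≤ ∑ p ∈ range t, (z p + z t) :=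
      sum_le_sum fun p _ => by nlinarith [hz p, hz t]
    rw [sum_add_distrib, sum_const, card_range, nsmul_eq_mul] at hstep
    rw [sum_range_succ, sum_range_succ z]
    push_cast
    nlinarith [sum_nonneg fun p (_ : p ∈ range t) => (hz p).1, hz t]

lemma empVar_le_empFreq {Ω : Type*} {k : ℕ} (X : ℕ → Ω → Fin k) (i : Fin k) (t : ℕ)
    (ω : Ω) :
    empVar X i t ω ≤ empFreq X i t ω := by
  set z : ℕ → ℝ := fun n => if X n ω = i then 1 else 0
  have hz : ∀ n, 0 ≤ z n ∧ z n ≤ 1 := fun n => by by_cases h : X n ω = i <;> simp [z, h]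
  rcases le_or_gt t 1 with ht | ht
  · interval_cases t <;> simp [empVar, empFreq]
  · have htR : (1 : ℝ) < t := by exact_mod_cast ht
    calc empVar X i t ω ≤ (t - 1) * (∑ p ∈ range t, z p) / (t * (t - 1)) :=
          div_le_div_of_nonneg_right (sum_sum_sub_sq_le hz t) (by positivity)
      _ = empFreq X i t ω := by
          rw [empFreq]; field_simp; exact mul_div_cancel_left₀ _ (by linarith)

section EmpiricalFrequency

variable {Ω : Type*} [MeasurableSpace Ω] {μ : Measure Ω} [IsProbabilityMeasure μ]
  {k : ℕ} {X : ℕ → Ω → Fin k}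

lemma measureReal_sqrt_add_le_abs_empFreq_sub_le (hX : ∀ n, Measurable (X n))
    (hindep : iIndepFun X μ) {i : Fin k} {q : ℝ} (hlaw : ∀ n, μ.real {ω | X n ω = i} = q)
    {t : ℕ} (ht : 0 < t) {L : ℝ} (hL : 0 < L) :
    μ.real {ω | √(3 * q * L / t) + 2 * L / t ≤ |empFreq X i t ω - q|} ≤ 2 * exp (-L) := by
  set Z : ℕ → Ω → ℝ := fun n ω => if X n ω = i then 1 else 0
  have hZ : ∀ n, Measurable (Z n) := fun n =>
    Measurable.ite (hX n (measurableSet_singleton i)) measurable_const measurable_const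
  have h01 : ∀ n ω, Z n ω = 0 ∨ Z n ω = 1 := fun n ω => by
    by_cases h : X n ω = i <;> simp [Z, h]
  have hZindep : iIndepFun Z μ :=
    hindep.comp (fun _ x => if x = i then (1 : ℝ) else 0) fun _ => measurable_of_countable _
  have hmean : ∀ n, μ[Z n] = q := fun n => by
    have hind : Z n = {ω | X n ω = i}.indicator 1 := by
      funext ω; simp [Z, Set.indicator_apply]
    have hset : MeasurableSet {ω | X n ω = i} := hX n (measurableSet_singleton i)
    rw [hind, integral_indicator_one hset, hlaw]
  have htR : (0 : ℝ) < t := Nat.cast_pos.2 ht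
  have hset : {ω | √(3 * q * L / t) + 2 * L / t ≤ |empFreq X i t ω - q|} =
      {ω | √(3 * t * q * L) + 2 * L ≤ |∑ j ∈ range t, Z j ω - t * q|} := by
    ext ω
    have hsqrt : √(3 * q * L / t) = √(3 * t * q * L) / t := by
      rw [show 3 * q * L / t = 3 * t * q * L / t ^ 2 by field_simp, sqrt_div' _ (by positivity),
        sqrt_sq htR.le]
    have hfreq : empFreq X i t ω - q = (∑ j ∈ range t, Z j ω - t * q) / t := by
      rw [empFreq]; field_simp; rfl
    simp only [Set.mem_ofPred_eq, hsqrt, hfreq, abs_div, abs_of_pos htR, ← add_div,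
      div_le_div_iff_of_pos_right htR]
  rw [hset]
  exact measureReal_sqrt_add_le_abs_sum_sub_le hZ h01 hZindep hmean t hL

end EmpiricalFrequency

lemma measure_iUnion_le_of_le_div_sq {Ω : Type*} [MeasurableSpace Ω] {μ : Measure Ω}
    {A : ℕ → Set Ω} {c : ℝ} (hc : 0 ≤ c) (hA : ∀ t, μ (A t) ≤ ENNReal.ofReal (c / t ^ 2)) :
    μ (⋃ t, A t) ≤ ENNReal.ofReal (c * (π ^ 2 / 6)) := by
  have hsum : HasSum (fun t : ℕ => c / t ^ 2) (c * (π ^ 2 / 6)) := by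
    simpa only [mul_one_div] using hasSum_zeta_two.mul_left c
  calc μ (⋃ t, A t) ≤ ∑' t, μ (A t) := measure_iUnion_le A
    _ ≤ ∑' t : ℕ, ENNReal.ofReal (c / t ^ 2) := ENNReal.tsum_le_tsum hA
    _ = ENNReal.ofReal (c * (π ^ 2 / 6)) := by
      rw [← ENNReal.ofReal_tsum_of_nonneg (fun t => by positivity) hsum.summable, hsum.tsum_eq]

lemma log_le_div_exp_one {x : ℝ} (hx : 0 < x) : log x ≤ x / exp 1 := by
  have h := log_le_sub_one_of_pos (div_pos hx (exp_pos 1))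
  rw [log_div hx.ne' (exp_pos 1).ne', log_exp] at h
  linarith

lemma log_four_mul_sq_mul_sq_le {a b t : ℝ} (ha : 0 < a) (hb : 0 < b) (hab : exp 5 ≤ a * b)
    (ht : a * log (a * b) ≤ t) : log (4 * b ^ 2 * t ^ 2) ≤ 61 / 20 * (t / a) := by
  have hlogab : 5 ≤ log (a * b) := by
    rw [← log_exp 5]; exact log_le_log (exp_pos 5) hab
  have hX : log (a * b) ≤ t / a := by rw [le_div_iff₀ ha]; linarith
  have hX0 : 0 < t / a := by linarith
  -- `4 b² t² = 4 (ab)² (t/a)²`, and `log (t/a) ≤ (t/a)/e` absorbs the `log t` term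
  have hsplit : log (4 * b ^ 2 * t ^ 2) = log 4 + 2 * log (a * b) + 2 * log (t / a) := by
    rw [show 4 * b ^ 2 * t ^ 2 = 4 * (a * b) ^ 2 * (t / a) ^ 2 by field_simp,
      log_mul (by positivity) (by positivity), log_mul (by norm_num) (by positivity),
      log_pow, log_pow]
    push_cast; ring
  have hlog4 : log 4 < 1.3863 := by
    rw [show (4 : ℝ) = 2 ^ 2 by norm_num, log_pow]
    linarith [log_two_lt_d9]
  have hlogX : 2 * log (t / a) ≤ 0.7358 * (t / a) := by
    have he : 2.7182818283 < exp 1 := exp_one_gt_d9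
    have : t / a / exp 1 ≤ 0.3679 * (t / a) := by
      rw [div_le_iff₀ (exp_pos 1)]; nlinarith
    linarith [log_le_div_exp_one hX0]
  rw [hsplit]
  linarith

noncomputable def confLog (k : ℕ) (δ : ℝ) (t : ℕ) : ℝ :=
  Real.log (4 * (k : ℝ) * (t : ℝ) ^ 2 / δ)

/-- `pairThreshold k δ (p i) (p i - p j)` is the `(i, j)` term of the maximum defining `T_m*`. -/
noncomputable def pairThreshold (k : ℕ) (δ p Δ : ℝ) : ℝ :=
  (592 / 3) * (p / Δ ^ 2) * Real.log ((592 / 3) * Real.sqrt ((k : ℝ) / δ) * (p / Δ ^ 2))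

/-- `183 / 11840 = (61 / 20) * (3 / 592)`; this margin makes the Bernstein deviations at most
`Δ / 4` and the confidence radii at most `6 Δ / 25` in `add_radius_lt_sub_radius`. -/
lemma le_and_mul_confLog_le_of_pairThreshold_le {k : ℕ} (hk : 2 ≤ k) {δ : ℝ} (hδ0 : 0 < δ)
    (hδ1 : δ < 1) {p Δ : ℝ} (hΔ : 0 < Δ) (hΔp : Δ ≤ p) (hp : p ≤ 1) {t : ℕ}
    (hT : pairThreshold k δ p Δ ≤ t) :
    987 ≤ t ∧ p * confLog k δ t ≤ 183 / 11840 * (t * Δ ^ 2) := by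
  set a := 592 / 3 * (p / Δ ^ 2) with ha_def
  set b := √(k / δ) with hb_def
  have hkR : (2 : ℝ) ≤ k := by exact_mod_cast hk
  have ha : 592 / 3 ≤ a := by
    have : 1 ≤ p / Δ ^ 2 := by rw [le_div_iff₀ (by positivity)]; nlinarith
    rw [ha_def]; linarith
  have hb : 1.4 ≤ b := by
    rw [hb_def, le_sqrt (by norm_num) (by positivity), le_div_iff₀ hδ0]; nlinarith
  have hab : exp 5 ≤ a * b := by
    have : exp 5 < 3 ^ 5 := by
      rw [show (5 : ℝ) = (5 : ℕ) * 1 by norm_num, exp_nat_mul]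
      exact pow_lt_pow_left₀ exp_one_lt_three (exp_pos 1).le (by norm_num)
    nlinarith
  have hlog : 5 ≤ log (a * b) := by rw [← log_exp 5]; exact log_le_log (exp_pos 5) hab
  have hT' : a * log (a * b) ≤ t := by
    rw [pairThreshold] at hT
    convert hT using 3
    ring
  refine ⟨?_, ?_⟩
  · have : (986 : ℝ) < t := by nlinarith
    exact_mod_cast this
  · have hL := log_four_mul_sq_mul_sq_le (by positivity) (by positivity) hab hT'
    have hb2 : b ^ 2 = k / δ := sq_sqrt (by positivity)
    rw [hb2, show 4 * (k / δ) * (t : ℝ) ^ 2 = 4 * k * t ^ 2 / δ by ring] at hL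
    calc p * confLog k δ t ≤ p * (61 / 20 * (t / a)) := by
          rw [confLog]; exact mul_le_mul_of_nonneg_left hL (by linarith)
      _ = 183 / 11840 * (t * Δ ^ 2) := by
          have : p ≠ 0 := (hΔ.trans_le hΔp).ne'
          rw [ha_def]; field_simp; ring

lemma confLog_pos {k : ℕ} (hk : 0 < k) {δ : ℝ} (hδ0 : 0 < δ) (hδ1 : δ < 1) {t : ℕ}
    (ht : 0 < t) : 0 < confLog k δ t := by
  have hkR : (1 : ℝ) ≤ k := by exact_mod_cast hk
  have htR : (1 : ℝ) ≤ t := by exact_mod_cast ht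
  apply log_pos
  rw [lt_div_iff₀ hδ0]
  nlinarith

lemma two_mul_exp_neg_confLog {k : ℕ} (hk : 0 < k) {δ : ℝ} (hδ0 : 0 < δ) {t : ℕ}
    (ht : 0 < t) : 2 * exp (-confLog k δ t) = δ / (2 * k) / t ^ 2 := by
  rw [confLog, exp_neg, exp_log (by positivity)]
  field_simp
  ring

section Separation

variable {p Δ L t : ℝ}

lemma le_of_mul_le_mul_sq {c : ℝ} (hΔ : 0 < Δ) (hΔp : Δ ≤ p) (hL0 : 0 ≤ L)
    (hL : p * L ≤ c * (t * Δ ^ 2)) : L ≤ c * t * Δ := by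
  have : Δ * L ≤ Δ * (c * t * Δ) := by nlinarith
  exact le_of_mul_le_mul_left this hΔ

lemma sqrt_three_mul_add_le {q : ℝ} (hΔ : 0 < Δ) (hΔp : Δ ≤ p) (hq : q ≤ p) (hL0 : 0 ≤ L)
    (ht : 0 < t) (hL : p * L ≤ 183 / 11840 * (t * Δ ^ 2)) :
    √(3 * q * L / t) + 2 * L / t ≤ Δ / 4 := by
  have hsqrt : √(3 * q * L / t) ≤ 0.2154 * Δ := by
    rw [sqrt_le_left (by positivity), div_le_iff₀ ht]
    nlinarith [mul_le_mul_of_nonneg_right hq hL0]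
  have hlin : 2 * L / t ≤ 0.0346 * Δ := by
    rw [div_le_iff₀ ht]
    nlinarith [le_of_mul_le_mul_sq hΔ hΔp hL0 hL]
  linarith

lemma sqrt_two_mul_add_le {V : ℝ} (hΔ : 0 < Δ) (hΔp : Δ ≤ p) (hV : V ≤ p + Δ / 4)
    (hL0 : 0 ≤ L) (ht : 7 ≤ t) (hL : p * L ≤ 183 / 11840 * (t * Δ ^ 2)) :
    √(2 * V * L / t) + 7 * L / (3 * (t - 1)) ≤ 6 / 25 * Δ := by
  have hsqrt : √(2 * V * L / t) ≤ 0.197 * Δ := by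
    rw [sqrt_le_left (by positivity), div_le_iff₀ (by linarith)]
    nlinarith [mul_le_mul_of_nonneg_right hV hL0]
  have hlin : 7 * L / (3 * (t - 1)) ≤ 0.043 * Δ := by
    rw [div_le_iff₀ (by linarith)]
    nlinarith [le_of_mul_le_mul_sq hΔ hΔp hL0 hL]
  linarith

end Separation

lemma add_radius_lt_sub_radius {p q p' q' Vp Vq L t : ℝ} (hq : 0 ≤ q) (hqp : q < p)
    (hL0 : 0 ≤ L) (ht : 7 ≤ t) (hL : p * L ≤ 183 / 11840 * (t * (p - q) ^ 2))
    (hdevp : |p' - p| ≤ √(3 * p * L / t) + 2 * L / t)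
    (hdevq : |q' - q| ≤ √(3 * q * L / t) + 2 * L / t) (hVp : Vp ≤ p') (hVq : Vq ≤ q') :
    q' + (√(2 * Vq * L / t) + 7 * L / (3 * (t - 1))) <
      p' - (√(2 * Vp * L / t) + 7 * L / (3 * (t - 1))) := by
  have hΔ : 0 < p - q := sub_pos.2 hqp
  have hΔp : p - q ≤ p := by linarith
  have hp' := abs_le.1 (hdevp.trans (sqrt_three_mul_add_le hΔ hΔp le_rfl hL0 (by linarith) hL))
  have hq' := abs_le.1 (hdevq.trans (sqrt_three_mul_add_le hΔ hΔp hqp.le hL0 (by linarith) hL))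
  have hrp := sqrt_two_mul_add_le (V := Vp) hΔ hΔp (by linarith) hL0 ht hL
  have hrq := sqrt_two_mul_add_le (V := Vq) hΔ hΔp (by linarith) hL0 ht hL
  linarith

section Sampling

variable {Ω : Type*} [MeasurableSpace Ω] {μ : Measure Ω} [IsProbabilityMeasure μ]
  {k : ℕ} {X : ℕ → Ω → Fin k}

lemma measure_exists_empFreq_deviates_le (hk : 0 < k) {δ : ℝ} (hδ0 : 0 < δ) (hδ1 : δ < 1)
    {p : Fin k → ℝ} (hX : ∀ n, Measurable (X n)) (hindep : iIndepFun X μ)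
    (hlaw : ∀ n i, μ.real {ω | X n ω = i} = p i) :
    μ {ω | ∃ i t, 0 < t ∧ √(3 * p i * confLog k δ t / t) + 2 * confLog k δ t / t ≤
      |empFreq X i t ω - p i|} ≤ ENNReal.ofReal δ := by
  set A : Fin k → ℕ → Set Ω := fun i t => {ω | 0 < t ∧
    √(3 * p i * confLog k δ t / t) + 2 * confLog k δ t / t ≤ |empFreq X i t ω - p i|}
  have hA : ∀ i t, μ (A i t) ≤ ENNReal.ofReal (δ / (2 * k) / t ^ 2) := fun i t => by
    rcases t.eq_zero_or_pos with rfl | ht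
    · simp [A]
    rw [← two_mul_exp_neg_confLog hk hδ0 ht, ← ofReal_measureReal]
    refine ENNReal.ofReal_le_ofReal ((measureReal_mono fun ω hω => hω.2).trans ?_)
    exact measureReal_sqrt_add_le_abs_empFreq_sub_le hX hindep (hlaw · i) ht
      (confLog_pos hk hδ0 hδ1 ht)
  have hπ : π ^ 2 / 12 ≤ 1 := by nlinarith [pi_lt_d2, pi_pos]
  calc μ {ω | ∃ i t, 0 < t ∧ √(3 * p i * confLog k δ t / t) + 2 * confLog k δ t / t ≤
        |empFreq X i t ω - p i|} = μ (⋃ i, ⋃ t, A i t) := by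
          congr 1; ext ω; simp [A]
    _ ≤ ∑ i, μ (⋃ t, A i t) := measure_iUnion_fintype_le _ _
    _ ≤ ∑ _i : Fin k, ENNReal.ofReal (δ / (2 * k) * (π ^ 2 / 6)) :=
        sum_le_sum fun i _ => measure_iUnion_le_of_le_div_sq (by positivity) (hA i)
    _ = ENNReal.ofReal (δ * (π ^ 2 / 12)) := by
        rw [sum_const, card_univ, Fintype.card_fin, nsmul_eq_mul, ← ENNReal.ofReal_natCast,
          ← ENNReal.ofReal_mul (by positivity)]
        congr 1
        field_simp
        ring
    _ ≤ ENNReal.ofReal δ := ENNReal.ofReal_le_ofReal (mul_le_of_le_one_right hδ0.le hπ)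

end Sampling

lemma add_confRadius_lt_sub_confRadius {Ω : Type*} {k : ℕ} (X : ℕ → Ω → Fin k) (hk : 2 ≤ k)
    {δ : ℝ} (hδ0 : 0 < δ) (hδ1 : δ < 1) {p : Fin k → ℝ} {i j : Fin k} (hpj : 0 ≤ p j)
    (hji : p j < p i) (hpi : p i ≤ 1) {t : ℕ} (hT : pairThreshold k δ (p i) (p i - p j) ≤ t)
    {ω : Ω} (hdev : ∀ l, 0 < t → |empFreq X l t ω - p l| <
      √(3 * p l * confLog k δ t / t) + 2 * confLog k δ t / t) :
    empFreq X j t ω + confRadius δ X j t ω < empFreq X i t ω - confRadius δ X i t ω := by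
  obtain ⟨ht, hL⟩ := le_and_mul_confLog_le_of_pairThreshold_le hk hδ0 hδ1 (sub_pos.2 hji)
    (by linarith) hpi hT
  have ht0 : 0 < t := by omega
  exact add_radius_lt_sub_radius hpj hji (confLog_pos (by omega) hδ0 hδ1 ht0).le
    (by exact_mod_cast (show 7 ≤ t by omega)) hL (hdev i ht0).le (hdev j ht0).le
    (empVar_le_empFreq X i t ω) (empVar_le_empFreq X j t ω)

theorem topm_query_complexity_upper_general {Ω : Type*} [MeasurableSpace Ω] (μ : Measure Ω)
    [IsProbabilityMeasure μ] (k m : ℕ) (hk : 2 ≤ k)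
    (δ : ℝ) (hδ0 : 0 < δ) (hδ1 : δ < 1)
    (p : Fin k → ℝ) (hp0 : ∀ i, 0 ≤ p i) (hp1 : ∑ i, p i = 1)
    (hsort : ∀ i j : Fin k, i < j → p j < p i)
    (X : ℕ → Ω → Fin k) (hmeas : ∀ t, Measurable (X t))
    (hindep : iIndepFun X μ)
    (hlaw : ∀ t i, μ {ω | X t ω = i} = ENNReal.ofReal (p i)) :
    ENNReal.ofReal (1 - δ) ≤
      μ {ω | ∀ t : ℕ,
        (∀ i j : Fin k, (i : ℕ) < m → m ≤ (j : ℕ) →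
          (592 / 3) * (p i / (p i - p j) ^ 2) *
              Real.log ((592 / 3) * Real.sqrt ((k : ℝ) / δ) * (p i / (p i - p j) ^ 2)) ≤
            (t : ℝ)) →
        ∀ i j : Fin k, (i : ℕ) < m → m ≤ (j : ℕ) →
          empFreq X j t ω + confRadius δ X j t ω <
            empFreq X i t ω - confRadius δ X i t ω} := by
  have hp_le_one : ∀ i, p i ≤ 1 := fun i => hp1 ▸ single_le_sum (fun j _ => hp0 j) (mem_univ i)
  have hlaw' : ∀ n i, μ.real {ω | X n ω = i} = p i := fun n i => by
    rw [measureReal_def, hlaw, ENNReal.toReal_ofReal (hp0 i)]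
  set B := {ω | ∃ i t, 0 < t ∧ √(3 * p i * confLog k δ t / t) + 2 * confLog k δ t / t ≤
      |empFreq X i t ω - p i|}
  have hB : μ B ≤ ENNReal.ofReal δ :=
    measure_exists_empFreq_deviates_le (by omega) hδ0 hδ1 hmeas hindep hlaw'
  refine le_trans ?_ (measure_mono (s := Bᶜ) ?_)
  · have hcompl : 1 - μ B ≤ μ Bᶜ := tsub_le_iff_left.2 <| by
      simpa only [Set.union_compl_self, measure_univ] using measure_union_le (μ := μ) B Bᶜ
    rw [ENNReal.ofReal_sub _ hδ0.le, ENNReal.ofReal_one]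
    exact (tsub_le_tsub_left hB 1).trans hcompl
  · intro ω hω t hT i j hi hj
    simp only [B, Set.mem_compl_iff, Set.mem_ofPred_eq, not_exists, not_and, not_le] at hω
    exact add_confRadius_lt_sub_confRadius X hk hδ0 hδ1 (hp0 j)
      (hsort i j (Fin.lt_def.2 (by omega))) (hp_le_one i) (hT i j hi hj) (hω · t)

/-- (Query complexity upper bound for top-`m` estimation, Theorem 7.) Let
`T_m* = max_{i ≤ m < j} (592/3)·(p_i/(p_i−p_j)²)·log((592/3)·sqrt(k/δ)·p_i/(p_i−p_j)²)`.
With probability at least `1 − δ`, at every time `t ≥ T_m*` (i.e. every `t` dominating all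
the pairwise thresholds) one has `p̂_i^t − β_i^t > p̂_j^t + β_j^t` simultaneously for all
`i ∈ {1,…,m}` and `j ∈ {m+1,…,k}` (indices `i.val < m ≤ j.val` in `Fin k`); in particular
the top-`m` stopping rule fires on the true top-`m` set within `T_m*` samples. -/
theorem topm_query_complexity_upper {Ω : Type*} [MeasurableSpace Ω] (μ : Measure Ω)
    [IsProbabilityMeasure μ] (k m : ℕ) (hk : 2 ≤ k) (hm1 : 1 ≤ m) (hmk : m < k)
    (δ : ℝ) (hδ0 : 0 < δ) (hδ1 : δ < 1)
    (p : Fin k → ℝ) (hp0 : ∀ i, 0 ≤ p i) (hp1 : ∑ i, p i = 1)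
    (hsort : ∀ i j : Fin k, i < j → p j < p i)
    (X : ℕ → Ω → Fin k) (hmeas : ∀ t, Measurable (X t))
    (hindep : iIndepFun X μ)
    (hlaw : ∀ t i, μ {ω | X t ω = i} = ENNReal.ofReal (p i)) :
    ENNReal.ofReal (1 - δ) ≤
      μ {ω | ∀ t : ℕ,
        (∀ i j : Fin k, (i : ℕ) < m → m ≤ (j : ℕ) →
          (592 / 3) * (p i / (p i - p j) ^ 2) *
              Real.log ((592 / 3) * Real.sqrt ((k : ℝ) / δ) * (p i / (p i - p j) ^ 2)) ≤
            (t : ℝ)) →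
        ∀ i j : Fin k, (i : ℕ) < m → m ≤ (j : ℕ) →
          empFreq X j t ω + confRadius δ X j t ω <
            empFreq X i t ω - confRadius δ X i t ω} :=
  topm_query_complexity_upper_general μ k m hk δ hδ0 hδ1 p hp0 hp1 hsort X hmeas hindep hlaw
end

section
/- (KL bound for the perturbed distribution in the lower-bound proof.) Let 0 < b < a be real numbers with a + b ≤ 1, let q = (a+b)/2, and let 0 < ε < q. Then a·log(a/(q−ε)) + b·log(b/(q+ε)) ≤ (a+b)·(a−b+2ε)² / ((a+b+2ε)·(a+b−2ε)). -/
/-! `log x ≤ x - 1` bounds each term of the divergence by its χ²-contribution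
`(a - p)² / p + (a - p)`; the perturbation preserves the total mass, so the linear parts cancel
and the bound is the χ²-divergence of the two-point perturbation, which is the right-hand side. -/

open Real

theorem mul_log_div_le_sq_div_add {a p : ℝ} (ha : 0 ≤ a) (hp : 0 < p) :
    a * log (a / p) ≤ (a - p) ^ 2 / p + (a - p) := by
  rcases ha.eq_or_lt with rfl | ha
  · simp [sq, hp.ne']
  calc a * log (a / p) ≤ a * (a / p - 1) := by
        gcongr
        exact log_le_sub_one_of_pos (by positivity)
    _ = (a - p) ^ 2 / p + (a - p) := by field_simp; ring

theorem chiSq_midpoint_perturbation_eq {a b ε : ℝ} (hplus : a + b + 2 * ε ≠ 0)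
    (hminus : a + b - 2 * ε ≠ 0) :
    (a - ((a + b) / 2 - ε)) ^ 2 / ((a + b) / 2 - ε)
        + (b - ((a + b) / 2 + ε)) ^ 2 / ((a + b) / 2 + ε)
      = (a + b) * (a - b + 2 * ε) ^ 2 / ((a + b + 2 * ε) * (a + b - 2 * ε)) := by
  have hplus' : (a + b) / 2 + ε ≠ 0 := by contrapose! hplus; linarith
  have hminus' : (a + b) / 2 - ε ≠ 0 := by contrapose! hminus; linarith
  field_simp
  ring

theorem kl_perturbed_bound_general (a b q ε : ℝ) (hb : 0 < b) (hba : b < a)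
    (hq : q = (a + b) / 2) (hε0 : 0 < ε) (hεq : ε < q) :
    a * Real.log (a / (q - ε)) + b * Real.log (b / (q + ε)) ≤
      (a + b) * (a - b + 2 * ε) ^ 2 / ((a + b + 2 * ε) * (a + b - 2 * ε)) := by
  subst hq
  calc a * log (a / ((a + b) / 2 - ε)) + b * log (b / ((a + b) / 2 + ε))
      ≤ ((a - ((a + b) / 2 - ε)) ^ 2 / ((a + b) / 2 - ε) + (a - ((a + b) / 2 - ε)))
        + ((b - ((a + b) / 2 + ε)) ^ 2 / ((a + b) / 2 + ε) + (b - ((a + b) / 2 + ε))) :=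
        add_le_add (mul_log_div_le_sq_div_add (by linarith) (by linarith))
          (mul_log_div_le_sq_div_add hb.le (by linarith))
    _ = (a - ((a + b) / 2 - ε)) ^ 2 / ((a + b) / 2 - ε)
        + (b - ((a + b) / 2 + ε)) ^ 2 / ((a + b) / 2 + ε) := by ring
    _ = _ := chiSq_midpoint_perturbation_eq (by linarith) (by linarith)

/-- (KL bound for the perturbed distribution in the lower-bound proof.)
Let `0 < b < a` with `a + b ≤ 1`, let `q = (a+b)/2`, and `0 < ε < q`. Then
`a·log(a/(q−ε)) + b·log(b/(q+ε)) ≤ (a+b)·(a−b+2ε)² / ((a+b+2ε)·(a+b−2ε))`. -/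
theorem kl_perturbed_bound (a b q ε : ℝ) (hb : 0 < b) (hba : b < a) (hab : a + b ≤ 1)
    (hq : q = (a + b) / 2) (hε0 : 0 < ε) (hεq : ε < q) :
    a * Real.log (a / (q - ε)) + b * Real.log (b / (q + ε)) ≤
      (a + b) * (a - b + 2 * ε) ^ 2 / ((a + b + 2 * ε) * (a + b - 2 * ε)) :=
  kl_perturbed_bound_general a b q ε hb hba hq hε0 hεq
end

section
/- (Binary reverse Pinsker inequality.) For all real numbers a ∈ [0,1] and b ∈ (0,1), the binary Kullback–Leibler divergence satisfies d(a, b) = a·log(a/b) + (1−a)·log((1−a)/(1−b)) ≤ (a−b)² / (b·(1−b)), with the conventions 0·log 0 = 0 and 0·log(0/b) = 0. -/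
/-! Bounding each logarithm by `log t ≤ t - 1` dominates the divergence by the χ²-divergence
`(a - b)² / b + (a - b)² / (1 - b)`, which is the right-hand side. -/

lemma mul_log_div_le_mul_sub_div {x c : ℝ} (hx : 0 ≤ x) (hc : 0 < c) :
    x * Real.log (x / c) ≤ x * (x - c) / c := by
  rcases hx.eq_or_lt with rfl | hx
  · simp
  calc x * Real.log (x / c) ≤ x * (x / c - 1) :=
        mul_le_mul_of_nonneg_left (Real.log_le_sub_one_of_pos (div_pos hx hc)) hx.le
    _ = x * (x - c) / c := by field_simp

/-- (Binary reverse Pinsker inequality.) For all `a ∈ [0,1]` and `b ∈ (0,1)`,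
`d(a, b) = a·log(a/b) + (1−a)·log((1−a)/(1−b)) ≤ (a−b)² / (b·(1−b))`.
(The conventions `0·log 0 = 0` and `0·log(0/b) = 0` are automatic since in Lean
`Real.log 0 = 0` and multiplication by `0` annihilates.) -/
theorem binary_reverse_pinsker (a b : ℝ) (ha0 : 0 ≤ a) (ha1 : a ≤ 1)
    (hb0 : 0 < b) (hb1 : b < 1) :
    a * Real.log (a / b) + (1 - a) * Real.log ((1 - a) / (1 - b)) ≤
      (a - b) ^ 2 / (b * (1 - b)) := by
  have hb1' : 0 < 1 - b := sub_pos.mpr hb1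
  calc a * Real.log (a / b) + (1 - a) * Real.log ((1 - a) / (1 - b))
      ≤ a * (a - b) / b + (1 - a) * ((1 - a) - (1 - b)) / (1 - b) :=
        add_le_add (mul_log_div_le_mul_sub_div ha0 hb0)
          (mul_log_div_le_mul_sub_div (sub_nonneg.mpr ha1) hb1')
    _ = (a - b) ^ 2 / (b * (1 - b)) := by
        field_simp
        ring
end

section
/- (Concentration of the empirical standard deviation.) Let t ≥ 2 and let X_1, …, X_t be independent random variables taking values in [0,1], and let δ ∈ (0,1). Then Pr( sqrt(E[V_t(X)]) > sqrt(V_t(X)) + sqrt(2 log(1/δ)/(t−1)) ) ≤ δ, and likewise Pr( sqrt(V_t(X)) > sqrt(E[V_t(X)]) + sqrt(2 log(1/δ)/(t−1)) ) ≤ δ. -/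
open MeasureTheory ProbabilityTheory

/-- Empirical (sample) variance of the vector `(X 0, …, X (t-1))`:
`V_t(X) = (1/(t(t−1))) Σ_{i < j} (X i − X j)²`. -/
noncomputable def sampleVariance {Ω : Type*} {t : ℕ} (X : Fin t → Ω → ℝ) (ω : Ω) : ℝ :=
  (∑ j : Fin t, ∑ i ∈ Finset.univ.filter (fun i : Fin t => i < j), (X i ω - X j ω) ^ 2) /
    ((t : ℝ) * ((t : ℝ) - 1))

/-!
Hoeffding's trick: with `q = ⌊t / 2⌋`, for every permutation `σ` of the indices the variable
`S σ = ∑_{k < q} (X_{σ(2k)} - X_{σ(2k+1)})²` is a sum of `q` independent `[0,1]`-valued terms, so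
`E exp(θ S σ) ≤ exp((e^θ - 1) E (S σ))`, and `2q V_t(X)` is the average of the `S σ` over all
permutations. Hölder's inequality over the permutations turns this into the Poisson-type bound
`E exp(2qθ V_t) ≤ exp(2q (e^θ - 1) E V_t)` for every real `θ`; Chernoff's method (with
`θ = log (1 + s / √E V_t)`, resp. `θ = -s / √E V_t`) then gives both tails, since `2q ≥ t - 1`.
-/

open Finset Real

theorem exp_mul_le_one_add_exp_sub_one_mul (θ : ℝ) {y : ℝ} (hy₀ : 0 ≤ y) (hy₁ : y ≤ 1) :
    exp (θ * y) ≤ 1 + (exp θ - 1) * y := by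
  have := convexOn_exp.2 (Set.mem_univ 0) (Set.mem_univ θ) (sub_nonneg.2 hy₁) hy₀ (by ring)
  simp only [smul_eq_mul, mul_zero, zero_add, exp_zero, mul_one] at this
  rw [mul_comm θ]
  linarith

theorem exp_neg_le_one_sub_add_sq_div_two {x : ℝ} (hx : 0 ≤ x) :
    exp (-x) ≤ 1 - x + x ^ 2 / 2 := by
  have hpos : 0 < 1 - x + x ^ 2 / 2 := by nlinarith [sq_nonneg (x - 1)]
  rw [exp_neg, inv_le_iff_one_le_mul₀' (exp_pos x)]
  -- `(1 + x + x²/2)(1 - x + x²/2) = 1 + x⁴/4`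
  calc (1 : ℝ) ≤ (1 + x + x ^ 2 / 2) * (1 - x + x ^ 2 / 2) := by nlinarith [sq_nonneg (x ^ 2)]
    _ ≤ exp x * (1 - x + x ^ 2 / 2) := by gcongr; exact quadratic_le_exp_of_nonneg hx

theorem exp_neg_mul_sqrt_sq_div_two_le {δ a n : ℝ} (hδ₀ : 0 < δ) (hδ₁ : δ ≤ 1) (ha : 0 < a)
    (han : a ≤ n) :
    exp (-(n * √(2 * log (1 / δ) / a) ^ 2) / 2) ≤ δ := by
  have hlog : 0 ≤ log (1 / δ) := log_nonneg (by rwa [le_div_iff₀ hδ₀, one_mul])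
  have hmono : log (1 / δ) ≤ n * log (1 / δ) / a := by
    rw [le_div_iff₀ ha]; nlinarith
  calc exp (-(n * √(2 * log (1 / δ) / a) ^ 2) / 2) = exp (-(n * log (1 / δ) / a)) := by
        rw [sq_sqrt (by positivity)]; ring_nf
    _ ≤ exp (-log (1 / δ)) := exp_le_exp.2 (by linarith)
    _ = δ := by rw [one_div, log_inv, neg_neg, exp_log hδ₀]

theorem sum_sum_eq_two_nsmul_sum_sum_lt {α M : Type*} [Fintype α] [LinearOrder α]
    [AddCommMonoid M] (d : α → α → M) (hsymm : ∀ i j, d i j = d j i) (hdiag : ∀ i, d i i = 0) :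
    ∑ i, ∑ j, d i j = 2 • ∑ j, ∑ i with i < j, d i j := by
  have hsplit : ∀ i j, d i j = (if i < j then d i j else 0) + (if j < i then d j i else 0) := by
    intro i j
    rcases lt_trichotomy i j with h | rfl | h
    · simp [h, h.not_gt]
    · simp [hdiag]
    · simp [h, h.not_gt, hsymm i j]
  rw [sum_congr rfl fun i _ => sum_congr rfl fun j _ => hsplit i j]
  simp only [sum_add_distrib, sum_filter, two_nsmul]
  rw [sum_comm]

theorem Equiv.Perm.sum_apply_apply_of_ne {α M : Type*} [Fintype α] [DecidableEq α]
    [AddCommMonoid M] (d : α → α → M) (hdiag : ∀ i, d i i = 0) {a b : α} (hab : a ≠ b) :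
    (Fintype.card α * (Fintype.card α - 1)) • ∑ σ : Equiv.Perm α, d (σ a) (σ b) =
      (Fintype.card α).factorial • ∑ i, ∑ j, d i j := by
  have htrans : ∀ i j, i ≠ j →
      ∑ σ : Equiv.Perm α, d (σ i) (σ j) = ∑ σ : Equiv.Perm α, d (σ a) (σ b) := by
    intro i j hij
    obtain ⟨τ, hτa, hτb⟩ :=
      MulAction.is_two_pretransitive_iff.mp (Equiv.Perm.isMultiplyPretransitive α 2) hab hij
    rw [Equiv.Perm.smul_def] at hτa hτb
    rw [← Equiv.sum_comp (Equiv.mulRight τ) (fun σ => d (σ a) (σ b))]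
    simp [Equiv.Perm.mul_apply, hτa, hτb]
  calc (Fintype.card α * (Fintype.card α - 1)) • ∑ σ : Equiv.Perm α, d (σ a) (σ b)
      = ∑ i, ∑ j, ∑ σ : Equiv.Perm α, d (σ i) (σ j) := by
        have hrow : ∀ i, ∑ j, ∑ σ : Equiv.Perm α, d (σ i) (σ j) =
            (Fintype.card α - 1) • ∑ σ : Equiv.Perm α, d (σ a) (σ b) := by
          intro i
          rw [← sum_erase univ (a := i) (by simp [hdiag]), sum_congr rfl fun j hj =>
            htrans i j (ne_of_mem_erase hj).symm, sum_const, card_erase_of_mem (mem_univ i),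
            card_univ]
        rw [sum_congr rfl fun i _ => hrow i, sum_const, card_univ, smul_smul]
    _ = ∑ σ : Equiv.Perm α, ∑ i, ∑ j, d (σ i) (σ j) := by
        simp only [sum_comm (γ := Equiv.Perm α)]
    _ = _ := by
        rw [sum_congr rfl fun σ _ => ?_, sum_const, card_univ, Fintype.card_perm]
        rw [← Equiv.sum_comp σ (fun i => ∑ j, d i j)]
        exact sum_congr rfl fun i _ => Equiv.sum_comp σ (d (σ i))

theorem sq_sub_mem_Icc {x y : ℝ} (hx : x ∈ Set.Icc (0 : ℝ) 1) (hy : y ∈ Set.Icc (0 : ℝ) 1) :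
    (x - y) ^ 2 ∈ Set.Icc (0 : ℝ) 1 := by
  obtain ⟨hx₀, hx₁⟩ := hx
  obtain ⟨hy₀, hy₁⟩ := hy
  exact ⟨sq_nonneg _, by nlinarith⟩

section SampleVariance

variable {Ω : Type*} {t : ℕ}

theorem measurable_sampleVariance [MeasurableSpace Ω] {X : Fin t → Ω → ℝ}
    (hX : ∀ i, Measurable (X i)) :
    Measurable (sampleVariance X) := by
  unfold sampleVariance
  fun_prop

theorem sampleVariance_eq_sum_sum_div (X : Fin t → Ω → ℝ) (ω : Ω) :
    sampleVariance X ω = (∑ i, ∑ j, (X i ω - X j ω) ^ 2) / (2 * t * (t - 1)) := by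
  rw [sampleVariance, sum_sum_eq_two_nsmul_sum_sum_lt _ (fun i j => by ring) (by simp),
    nsmul_eq_mul, Nat.cast_ofNat, mul_assoc, mul_div_mul_left _ _ two_ne_zero]

theorem sampleVariance_mem_Icc {X : Fin t → Ω → ℝ}
    (hX : ∀ i ω, X i ω ∈ Set.Icc (0 : ℝ) 1) (ω : Ω) :
    sampleVariance X ω ∈ Set.Icc (0 : ℝ) 1 := by
  rw [sampleVariance_eq_sum_sum_div]
  rcases lt_or_ge t 2 with ht | ht
  -- for `t ≤ 1` the denominator vanishes, and `x / 0 = 0`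
  · interval_cases t <;> simp
  have ht' : (2 : ℝ) ≤ t := by exact_mod_cast ht
  have hden : 0 < 2 * (t : ℝ) * (t - 1) := by nlinarith
  refine ⟨div_nonneg (by positivity) hden.le, div_le_one_of_le₀ ?_ hden.le⟩
  calc ∑ i, ∑ j, (X i ω - X j ω) ^ 2 ≤ ∑ _i : Fin t, ∑ _j : Fin t, (1 : ℝ) :=
        sum_le_sum fun i _ => sum_le_sum fun j _ => (sq_sub_mem_Icc (hX i ω) (hX j ω)).2
    _ = t * t := by simp
    _ ≤ 2 * t * (t - 1) := by nlinarith

theorem sum_perm_sq_sub_eq_mul_sampleVariance (X : Fin t → Ω → ℝ) (ω : Ω) {a b : Fin t}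
    (hab : a ≠ b) :
    ∑ σ : Equiv.Perm (Fin t), (X (σ a) ω - X (σ b) ω) ^ 2 =
      2 * t.factorial * sampleVariance X ω := by
  have ht : 1 < t := by simpa using Fintype.one_lt_card_iff.2 ⟨a, b, hab⟩
  have h := Equiv.Perm.sum_apply_apply_of_ne (fun i j => (X i ω - X j ω) ^ 2) (by simp) hab
  simp only [Fintype.card_fin, nsmul_eq_mul] at h
  rw [sampleVariance_eq_sum_sum_div]
  push_cast [Nat.cast_sub ht.le] at h
  have ht' : (1 : ℝ) < t := by exact_mod_cast ht
  rw [mul_div_assoc', eq_div_iff (by nlinarith)]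
  linear_combination 2 * h

theorem sum_perm_sum_sq_sub_eq_mul_sampleVariance {q : ℕ} (X : Fin t → Ω → ℝ) (ω : Ω)
    (e : Fin q × Fin 2 ↪ Fin t) :
    ∑ σ : Equiv.Perm (Fin t), ∑ k, (X (σ (e (k, 0))) ω - X (σ (e (k, 1))) ω) ^ 2 =
      2 * q * t.factorial * sampleVariance X ω := by
  rw [sum_comm, sum_congr rfl fun k _ => sum_perm_sq_sub_eq_mul_sampleVariance X ω
    (e.injective.ne (by simp) : e (k, 0) ≠ e (k, 1))]
  simp only [sum_const, card_univ, Fintype.card_fin, nsmul_eq_mul]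
  ring

end SampleVariance

theorem ProbabilityTheory.iIndepFun.curry {Ω ι κ 𝓧 : Type*} [MeasurableSpace Ω]
    [MeasurableSpace 𝓧] {μ : Measure Ω} {X : ι → κ → Ω → 𝓧} (hX : ∀ i j, Measurable (X i j))
    (h : iIndepFun (fun p : ι × κ => X p.1 p.2) μ) :
    iIndepFun (fun i ω j => X i j ω) μ := by
  have := h.isProbabilityMeasure
  have : ∀ i j, IsProbabilityMeasure (μ.map (X i j)) :=
    fun i j => Measure.isProbabilityMeasure_map (hX i j).aemeasurable
  have hrow : ∀ i, iIndepFun (X i) μ := fun i =>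
    h.precomp (g := fun j => (i, j)) fun j j' hjj' => (Prod.ext_iff.1 hjj').2
  rw [iIndepFun_iff_map_fun_eq_infinitePi_map (fun i => by fun_prop)]
  have hcurry : (fun ω i j => X i j ω) = MeasurableEquiv.curry ι κ 𝓧 ∘ fun ω p => X p.1 p.2 ω :=
    rfl
  have hlaw : μ.map (fun ω (p : ι × κ) => X p.1 p.2 ω) =
      Measure.infinitePi fun p : ι × κ => μ.map (X p.1 p.2) :=
    h.map_fun_eq_infinitePi_map fun p : ι × κ => hX p.1 p.2
  rw [hcurry, ← Measure.map_map (by fun_prop) (by fun_prop), hlaw,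
    Measure.infinitePi_map_curry fun i j => μ.map (X i j)]
  refine congrArg Measure.infinitePi (funext fun i => ?_)
  exact ((hrow i).map_fun_eq_infinitePi_map (hX i)).symm

section Concentration

variable {Ω : Type*} [MeasurableSpace Ω] {μ : Measure Ω}

theorem integral_prod_rpow_le {ι : Type*} (s : Finset ι) {f : ι → Ω → ℝ}
    (hf : ∀ i ∈ s, Integrable (f i) μ) (hf₀ : ∀ i ω, 0 ≤ f i ω) {p : ι → ℝ}
    (hp : ∑ i ∈ s, p i = 1) (hp₀ : ∀ i ∈ s, 0 ≤ p i) :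
    ∫ ω, ∏ i ∈ s, f i ω ^ p i ∂μ ≤ ∏ i ∈ s, (∫ ω, f i ω ∂μ) ^ p i := by
  have hofReal : ∀ ω, ENNReal.ofReal (∏ i ∈ s, f i ω ^ p i) =
      ∏ i ∈ s, ENNReal.ofReal (f i ω) ^ p i := by
    intro ω
    rw [ENNReal.ofReal_prod_of_nonneg fun i _ => rpow_nonneg (hf₀ i ω) _]
    exact prod_congr rfl fun i hi => (ENNReal.ofReal_rpow_of_nonneg (hf₀ i ω) (hp₀ i hi)).symm
  rw [integral_eq_lintegral_of_nonneg_ae (ae_of_all _ fun ω => prod_nonneg fun i _ =>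
      rpow_nonneg (hf₀ i ω) _)
    (Finset.aemeasurable_fun_prod _ fun i hi =>
      (hf i hi).aemeasurable.pow_const _).aestronglyMeasurable]
  refine ENNReal.toReal_le_of_le_ofReal (prod_nonneg fun i _ =>
    rpow_nonneg (integral_nonneg (hf₀ i)) _) ?_
  calc ∫⁻ ω, ENNReal.ofReal (∏ i ∈ s, f i ω ^ p i) ∂μ
      = ∫⁻ ω, ∏ i ∈ s, ENNReal.ofReal (f i ω) ^ p i ∂μ := lintegral_congr hofReal
    _ ≤ ∏ i ∈ s, (∫⁻ ω, ENNReal.ofReal (f i ω) ∂μ) ^ p i :=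
        ENNReal.lintegral_prod_norm_pow_le s (fun i hi => (hf i hi).aemeasurable.ennreal_ofReal)
          hp hp₀
    _ = ENNReal.ofReal (∏ i ∈ s, (∫ ω, f i ω ∂μ) ^ p i) := by
        rw [ENNReal.ofReal_prod_of_nonneg fun i _ => rpow_nonneg (integral_nonneg (hf₀ i)) _]
        refine prod_congr rfl fun i hi => ?_
        rw [← ofReal_integral_eq_lintegral_ofReal (hf i hi) (ae_of_all _ (hf₀ i)),
          ENNReal.ofReal_rpow_of_nonneg (integral_nonneg (hf₀ i)) (hp₀ i hi)]

variable [IsProbabilityMeasure μ]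

theorem mgf_le_exp_mul_integral_of_mem_Icc {Y : Ω → ℝ} (hY : Measurable Y)
    (h01 : ∀ ω, Y ω ∈ Set.Icc (0 : ℝ) 1) (θ : ℝ) :
    mgf Y μ θ ≤ exp ((exp θ - 1) * μ[Y]) := by
  have hint : Integrable Y μ := .of_mem_Icc 0 1 hY.aemeasurable (ae_of_all _ h01)
  calc mgf Y μ θ ≤ ∫ ω, 1 + (exp θ - 1) * Y ω ∂μ :=
        integral_mono (integrable_exp_mul_of_mem_Icc hY.aemeasurable (ae_of_all _ h01))
          ((integrable_const 1).add (hint.const_mul _))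
          fun ω => exp_mul_le_one_add_exp_sub_one_mul θ (h01 ω).1 (h01 ω).2
    _ = 1 + (exp θ - 1) * μ[Y] := by
        rw [integral_add (integrable_const 1) (hint.const_mul _), integral_const,
          integral_const_mul]
        simp
    _ ≤ exp ((exp θ - 1) * μ[Y]) := by linarith [add_one_le_exp ((exp θ - 1) * μ[Y])]

theorem ProbabilityTheory.iIndepFun.mgf_sum_le_of_mem_Icc {ι : Type*} {Y : ι → Ω → ℝ}
    (h : iIndepFun Y μ) (hY : ∀ i, Measurable (Y i)) (h01 : ∀ i ω, Y i ω ∈ Set.Icc (0 : ℝ) 1)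
    (s : Finset ι) (θ : ℝ) :
    mgf (∑ i ∈ s, Y i) μ θ ≤ exp ((exp θ - 1) * ∑ i ∈ s, μ[Y i]) := by
  rw [h.mgf_sum hY, mul_sum, exp_sum]
  exact prod_le_prod (fun i _ => mgf_nonneg) fun i _ =>
    mgf_le_exp_mul_integral_of_mem_Icc (hY i) (h01 i) θ

theorem mgf_sum_sq_sub_le {ι κ : Type*} [Fintype κ] {X : ι → Ω → ℝ}
    (hX : ∀ i, Measurable (X i)) (hX01 : ∀ i ω, X i ω ∈ Set.Icc (0 : ℝ) 1)
    (hindep : iIndepFun X μ) (e : κ × Fin 2 ↪ ι) (θ : ℝ) :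
    mgf (∑ k, fun ω => (X (e (k, 0)) ω - X (e (k, 1)) ω) ^ 2) μ θ ≤
      exp ((exp θ - 1) * ∑ k, ∫ ω, (X (e (k, 0)) ω - X (e (k, 1)) ω) ^ 2 ∂μ) := by
  have hpairs : iIndepFun (fun k ω j => X (e (k, j)) ω) μ :=
    (hindep.precomp e.injective).curry fun _ _ => hX _
  exact (hpairs.comp (fun _ v => (v 0 - v 1) ^ 2) fun _ => by fun_prop).mgf_sum_le_of_mem_Icc
    (fun _ => by fun_prop) (fun _ ω => sq_sub_mem_Icc (hX01 _ ω) (hX01 _ ω)) univ θ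

theorem mgf_sampleVariance_le {t q : ℕ} {X : Fin t → Ω → ℝ} (hX : ∀ i, Measurable (X i))
    (hX01 : ∀ i ω, X i ω ∈ Set.Icc (0 : ℝ) 1) (hindep : iIndepFun X μ)
    (e : Fin q × Fin 2 ↪ Fin t) (θ : ℝ) :
    mgf (sampleVariance X) μ (2 * q * θ) ≤
      exp (2 * q * (exp θ - 1) * μ[sampleVariance X]) := by
  set P : ℝ := (t.factorial : ℝ)
  have hP0 : 0 < P := by positivity
  let Y : Equiv.Perm (Fin t) → Fin q → Ω → ℝ :=
    fun σ k ω => (X (σ (e (k, 0))) ω - X (σ (e (k, 1))) ω) ^ 2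
  have hY01 : ∀ σ k ω, Y σ k ω ∈ Set.Icc (0 : ℝ) 1 :=
    fun σ k ω => sq_sub_mem_Icc (hX01 _ ω) (hX01 _ ω)
  have hYint : ∀ σ k, Integrable (Y σ k) μ := fun σ k =>
    .of_mem_Icc 0 1 (by fun_prop) (ae_of_all _ (hY01 σ k))
  have hdecomp : ∀ ω, ∑ σ, ∑ k, Y σ k ω = 2 * q * P * sampleVariance X ω :=
    fun ω => sum_perm_sum_sq_sub_eq_mul_sampleVariance X ω e
  calc mgf (sampleVariance X) μ (2 * q * θ)
      = ∫ ω, ∏ σ : Equiv.Perm (Fin t), exp (θ * ∑ k, Y σ k ω) ^ P⁻¹ ∂μ := by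
        refine integral_congr_ae (ae_of_all _ fun ω => ?_)
        simp only [← exp_mul, ← exp_sum, ← sum_mul, ← mul_sum, hdecomp]
        congr 1
        field_simp
    _ ≤ ∏ σ : Equiv.Perm (Fin t), (∫ ω, exp (θ * ∑ k, Y σ k ω) ∂μ) ^ P⁻¹ := by
        refine integral_prod_rpow_le univ (fun σ _ => ?_) (fun _ _ => (exp_pos _).le) ?_
          fun _ _ => by positivity
        · refine integrable_exp_mul_of_mem_Icc (a := 0) (b := q) (by fun_prop)
            (ae_of_all _ fun ω => ⟨sum_nonneg fun k _ => (hY01 σ k ω).1, ?_⟩)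
          exact (sum_le_sum fun k _ => (hY01 σ k ω).2).trans (by simp)
        · rw [sum_const, card_univ, Fintype.card_perm, Fintype.card_fin, nsmul_eq_mul,
            mul_inv_cancel₀ hP0.ne']
    _ ≤ ∏ σ : Equiv.Perm (Fin t), exp ((exp θ - 1) * ∑ k, μ[Y σ k]) ^ P⁻¹ := by
        refine prod_le_prod (fun _ _ => by positivity) fun σ _ => ?_
        gcongr
        simpa [mgf] using mgf_sum_sq_sub_le hX hX01 hindep (e.trans σ.toEmbedding) θ
    _ = exp (2 * q * (exp θ - 1) * μ[sampleVariance X]) := by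
        have hmean : ∑ σ, ∑ k, μ[Y σ k] = 2 * q * P * μ[sampleVariance X] := by
          calc ∑ σ, ∑ k, μ[Y σ k] = ∑ σ, ∫ ω, ∑ k, Y σ k ω ∂μ :=
                sum_congr rfl fun σ _ => (integral_finsetSum _ fun k _ => hYint σ k).symm
            _ = ∫ ω, ∑ σ, ∑ k, Y σ k ω ∂μ := (integral_finsetSum _ fun σ _ =>
                integrable_finsetSum _ fun k _ => hYint σ k).symm
            _ = 2 * q * P * μ[sampleVariance X] := by
                simp only [hdecomp]; exact integral_const_mul _ _
        simp only [← exp_mul, ← exp_sum, ← sum_mul, ← mul_sum, hmean]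
        congr 1
        field_simp

section Tails

variable {V : Ω → ℝ} (hV : Measurable V) (hV01 : ∀ ω, V ω ∈ Set.Icc (0 : ℝ) 1) {n : ℝ}
  (hn : 0 ≤ n) (hmgf : ∀ θ, mgf V μ (n * θ) ≤ exp (n * (exp θ - 1) * μ[V]))
include hV hV01 hn hmgf

theorem measureReal_sqrt_integral_add_lt_sqrt_le {s : ℝ} (hs : 0 ≤ s) :
    μ.real {ω | √(μ[V]) + s < √(V ω)} ≤ exp (-(n * s ^ 2)) := by
  set m := μ[V]
  have hm : 0 ≤ m := integral_nonneg fun ω => (hV01 ω).1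
  obtain ⟨θ, hθ, hexp⟩ : ∃ θ, 0 ≤ θ ∧ (exp θ - 1) * m - θ * (√m + s) ^ 2 ≤ -s ^ 2 := by
    rcases hm.eq_or_lt with hm0 | hmpos
    · exact ⟨1, zero_le_one, by simp [← hm0]⟩
    have hsm : 0 < √m := sqrt_pos.2 hmpos
    set r := s / √m
    have hr : 0 ≤ r := by positivity
    have hrs : r * √m = s := div_mul_cancel₀ s hsm.ne'
    refine ⟨log (1 + r), log_nonneg (by linarith), ?_⟩
    have hlog : s / (√m + s) ≤ log (1 + r) := by
      refine le_trans (le_of_eq ?_) (one_sub_inv_le_log_of_pos (by positivity))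
      rw [← hrs]
      field_simp
      ring
    have hrm : r * m = s * √m := by rw [← hrs, mul_assoc, mul_self_sqrt hm]
    rw [exp_log (by positivity), add_sub_cancel_left, hrm]
    have : s * (√m + s) ≤ log (1 + r) * (√m + s) ^ 2 := by
      rw [div_le_iff₀ (by positivity)] at hlog
      nlinarith
    nlinarith
  calc μ.real {ω | √m + s < √(V ω)} ≤ μ.real {ω | (√m + s) ^ 2 ≤ V ω} :=
        measureReal_mono fun ω hω => ((lt_sqrt (by positivity)).1 hω).le
    _ ≤ exp (-(n * θ) * (√m + s) ^ 2) * mgf V μ (n * θ) :=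
        measure_ge_le_exp_mul_mgf _ (mul_nonneg hn hθ)
          (integrable_exp_mul_of_mem_Icc hV.aemeasurable (ae_of_all _ hV01))
    _ ≤ exp (-(n * θ) * (√m + s) ^ 2) * exp (n * (exp θ - 1) * m) := by
        gcongr; exact hmgf θ
    _ = exp (n * ((exp θ - 1) * m - θ * (√m + s) ^ 2)) := by rw [← exp_add]; ring_nf
    _ ≤ exp (-(n * s ^ 2)) := exp_le_exp.2 (by nlinarith)

theorem measureReal_sqrt_add_lt_sqrt_integral_le {s : ℝ} (hs : 0 ≤ s) :
    μ.real {ω | √(V ω) + s < √(μ[V])} ≤ exp (-(n * s ^ 2) / 2) := by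
  set m := μ[V]
  have hm : 0 ≤ m := integral_nonneg fun ω => (hV01 ω).1
  rcases hm.eq_or_lt with hm0 | hmpos
  · have hempty : {ω | √(V ω) + s < √m} = ∅ :=
      Set.eq_empty_of_forall_notMem fun ω hω => by
        simp only [Set.mem_ofPred_eq, ← hm0, sqrt_zero] at hω
        linarith [sqrt_nonneg (V ω)]
    rw [hempty, measureReal_empty]
    positivity
  have hsm : 0 < √m := sqrt_pos.2 hmpos
  set c := s / √m
  have hc : 0 ≤ c := by positivity
  have hcs : c * √m = s := div_mul_cancel₀ s hsm.ne'
  have hsub : {ω | √(V ω) + s < √m} ⊆ {ω | V ω ≤ m - s * √m} := by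
    intro ω hω
    simp only [Set.mem_ofPred_eq] at hω ⊢
    have := sq_sqrt hm
    have := sq_sqrt (hV01 ω).1
    nlinarith [sqrt_nonneg (V ω)]
  calc μ.real {ω | √(V ω) + s < √m} ≤ μ.real {ω | V ω ≤ m - s * √m} := measureReal_mono hsub
    _ ≤ exp (-(n * -c) * (m - s * √m)) * mgf V μ (n * -c) :=
        measure_le_le_exp_mul_mgf _ (by nlinarith)
          (integrable_exp_mul_of_mem_Icc hV.aemeasurable (ae_of_all _ hV01))
    _ ≤ exp (-(n * -c) * (m - s * √m)) * exp (n * (exp (-c) - 1) * m) := by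
        gcongr; exact hmgf (-c)
    _ = exp (n * (c * (m - s * √m) + (exp (-c) - 1) * m)) := by rw [← exp_add]; ring_nf
    _ ≤ exp (-(n * s ^ 2) / 2) := by
        refine exp_le_exp.2 ?_
        have hexp := mul_le_mul_of_nonneg_right (exp_neg_le_one_sub_add_sq_div_two hc) hm
        have hcm : c ^ 2 * m = s ^ 2 := by rw [← hcs, mul_pow, sq_sqrt hm]
        have key : c * (m - s * √m) + (exp (-c) - 1) * m ≤ -s ^ 2 / 2 := by
          nlinarith
        nlinarith [mul_le_mul_of_nonneg_left key hn]

end Tails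

end Concentration

/-- (Concentration of the empirical standard deviation.) Let `t ≥ 2` and `X 0, …, X (t-1)` be
independent random variables with values in `[0,1]`, and `δ ∈ (0,1)`. Then
`Pr( sqrt(E[Vₜ(X)]) > sqrt(Vₜ(X)) + sqrt(2 log(1/δ)/(t−1)) ) ≤ δ`, and likewise
`Pr( sqrt(Vₜ(X)) > sqrt(E[Vₜ(X)]) + sqrt(2 log(1/δ)/(t−1)) ) ≤ δ`. -/
theorem empirical_std_concentration {Ω : Type*} [MeasurableSpace Ω] (μ : Measure Ω)
    [IsProbabilityMeasure μ] (t : ℕ) (ht : 2 ≤ t)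
    (X : Fin t → Ω → ℝ) (hmeas : ∀ i, Measurable (X i))
    (hrange : ∀ i ω, X i ω ∈ Set.Icc (0 : ℝ) 1)
    (hindep : iIndepFun X μ)
    (δ : ℝ) (hδ0 : 0 < δ) (hδ1 : δ < 1) :
    μ {ω | Real.sqrt (∫ x, sampleVariance X x ∂μ) >
        Real.sqrt (sampleVariance X ω) + Real.sqrt (2 * Real.log (1 / δ) / ((t : ℝ) - 1))} ≤
      ENNReal.ofReal δ ∧
    μ {ω | Real.sqrt (sampleVariance X ω) >
        Real.sqrt (∫ x, sampleVariance X x ∂μ) + Real.sqrt (2 * Real.log (1 / δ) / ((t : ℝ) - 1))} ≤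
      ENNReal.ofReal δ := by
  set q := t / 2
  let e : Fin q × Fin 2 ↪ Fin t :=
    finProdFinEquiv.toEmbedding.trans (Fin.castLEEmb (by omega))
  have hmgf := mgf_sampleVariance_le hmeas hrange hindep e
  have hV := measurable_sampleVariance hmeas
  have hV01 := sampleVariance_mem_Icc hrange
  set s := √(2 * log (1 / δ) / ((t : ℝ) - 1))
  have hs : 0 ≤ s := sqrt_nonneg _
  have hδ : exp (-(2 * q * s ^ 2) / 2) ≤ δ := by
    have ht' : (2 : ℝ) ≤ t := by exact_mod_cast ht
    refine exp_neg_mul_sqrt_sq_div_two_le hδ0 hδ1.le (by linarith) ?_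
    have : (t : ℝ) ≤ 2 * q + 1 := by exact_mod_cast (by omega : t ≤ 2 * q + 1)
    linarith
  have hμ : ∀ S, μ.real S ≤ δ → μ S ≤ ENNReal.ofReal δ := fun S h =>
    (ENNReal.le_ofReal_iff_toReal_le (measure_ne_top μ S) hδ0.le).2 h
  refine ⟨hμ _ ?_, hμ _ ?_⟩
  · exact (measureReal_sqrt_add_lt_sqrt_integral_le hV hV01 (by positivity) hmgf hs).trans hδ
  · refine (measureReal_sqrt_integral_add_lt_sqrt_le hV hV01 (by positivity) hmgf hs).trans
      (le_trans ?_ hδ)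
    exact exp_le_exp.2 (by nlinarith [sq_nonneg s])
end

section
/- Let 0 < p_2 < p_1 with p_1 + p_2 ≤ 1, let r be a real number satisfying r > p_1, and let 0 < ε < p_2. Then p_2·log(p_2/(p_1+ε)) + r·log( r / (r − (p_1 − p_2) − ε) ) ≤ (p_1 + p_2)·(p_1 − p_2 + ε)² / ((p_1 + ε)·(p_2 − ε)). -/
/-- (KL chain bound in the proof of the relaxed MAB lower bound, Theorem 9.)
Let `0 < p₂ < p₁` with `p₁ + p₂ ≤ 1`, let `r > p₁`, and `0 < ε < p₂`. Then
`p₂·log(p₂/(p₁+ε)) + r·log(r/(r−(p₁−p₂)−ε)) ≤ (p₁+p₂)·(p₁−p₂+ε)²/((p₁+ε)·(p₂−ε))`. -/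
theorem kl_chain_bound (p₁ p₂ r ε : ℝ) (hp2 : 0 < p₂) (hp21 : p₂ < p₁) (hsum : p₁ + p₂ ≤ 1)
    (hr : p₁ < r) (hε0 : 0 < ε) (hεp : ε < p₂) :
    p₂ * Real.log (p₂ / (p₁ + ε)) + r * Real.log (r / (r - (p₁ - p₂) - ε)) ≤
      (p₁ + p₂) * (p₁ - p₂ + ε) ^ 2 / ((p₁ + ε) * (p₂ - ε)) := by
  have ha : 0 < p₁ + ε := by linarith
  have hb : 0 < p₂ - ε := by linarith
  have hc : 0 < r - (p₁ - p₂) - ε := by linarith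
  have hr0 : 0 < r := by linarith
  have h1 : Real.log (p₂ / (p₁ + ε)) ≤ p₂ / (p₁ + ε) - 1 :=
    Real.log_le_sub_one_of_pos (by positivity)
  have h2 : Real.log (r / (r - (p₁ - p₂) - ε)) ≤ r / (r - (p₁ - p₂) - ε) - 1 :=
    Real.log_le_sub_one_of_pos (by positivity)
  have hL : p₂ * Real.log (p₂ / (p₁ + ε)) + r * Real.log (r / (r - (p₁ - p₂) - ε)) ≤
      p₂ * (p₂ / (p₁ + ε) - 1) + r * (r / (r - (p₁ - p₂) - ε) - 1) :=
    add_le_add (mul_le_mul_of_nonneg_left h1 hp2.le) (mul_le_mul_of_nonneg_left h2 hr0.le)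
  refine hL.trans ?_
  have key : p₂ * (p₂ / (p₁ + ε) - 1) + r * (r / (r - (p₁ - p₂) - ε) - 1) ≤
      (p₁ + p₂) * (p₁ - p₂ + ε) ^ 2 / ((p₁ + ε) * (p₂ - ε)) := by
    have e : p₂ * (p₂ / (p₁ + ε) - 1) + r * (r / (r - (p₁ - p₂) - ε) - 1) =
        (p₂ * (p₂ - (p₁ + ε)) * (r - (p₁ - p₂) - ε) + r * (r - (r - (p₁ - p₂) - ε)) * (p₁ + ε)) /
          ((p₁ + ε) * (r - (p₁ - p₂) - ε)) := by
      field_simp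
    rw [e, div_le_div_iff₀ (by positivity) (by positivity)]
    nlinarith [mul_nonneg (sq_nonneg ((p₁ + ε) * (p₁ - p₂ + ε)))
      (by linarith : (0:ℝ) ≤ (r - (p₁ - p₂) - ε) - (p₂ - ε))]
  exact key
end

section
/- (Sufficiency of the stopping time T*, Appendix B.) Let k ≥ 1 be an integer, δ ∈ (0,1], and 0 < p < p_1 ≤ 1 be reals. Set x = p_1/(p_1 − p)² and t* = (592/3)·x·log( (592/3)·sqrt(k/δ)·x ). Then for every real t ≥ t*, t / log( 2·sqrt(2k/δ)·t ) > (296/3)·x. -/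
/-!
With `y = (296/3)·x`, `B = 2·sqrt(k/δ)` and `L = log (B·y)`, the threshold is `T = 2·y·L` and
`sqrt(2k/δ) = √2·sqrt(k/δ)`, so the claim reads `y · log (√2·B·t) < t` for `t ≥ T`.
At `t = T` this is `log (2√2·L) < L`, true because `L ≥ log (592/3) > 5`; beyond `T` the
left side grows by `y · log (t/T) ≤ (y/T)(t - T) ≤ t - T`.
-/

open Real

lemma three_mul_lt_exp {L : ℝ} (hL : 5 ≤ L) : 3 * L < exp L := by
  have hcube : L ^ 3 / 6 ≤ exp L := by
    simpa [Nat.factorial] using pow_div_factorial_le_exp L (by linarith) 3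
  have hsq : 25 ≤ L ^ 2 := by nlinarith
  nlinarith [mul_le_mul_of_nonneg_left hsq (by linarith : (0 : ℝ) ≤ L)]

lemma log_two_mul_sqrt_two_mul_lt_self {L : ℝ} (hL : 5 ≤ L) : log (2 * √2 * L) < L := by
  have hsqrt2 : √2 < 3 / 2 := by
    rw [sqrt_lt' (by norm_num)]; norm_num
  rw [log_lt_iff_lt_exp (by positivity)]
  nlinarith [three_mul_lt_exp hL]

lemma exp_five_lt : exp 5 < 592 / 3 := by
  calc exp 5 = exp 1 ^ 5 := by rw [← exp_nat_mul]; norm_num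
    _ < 2.7182818286 ^ 5 := by gcongr; exact exp_one_lt_d9
    _ < 592 / 3 := by norm_num

lemma lt_div_log_of_two_mul_log_le {y B t : ℝ} (hy : 0 < y) (hB : 0 < B)
    (hL : 5 ≤ log (B * y)) (ht : 2 * y * log (B * y) ≤ t) :
    y < t / log (√2 * B * t) := by
  set L := log (B * y)
  set T := 2 * y * L
  have hT : 0 < T := by positivity
  have htT : 0 < t / T := div_pos (hT.trans_le ht) hT
  have hlog_T : log (√2 * B * T) = L + log (2 * √2 * L) := by
    rw [show √2 * B * T = B * y * (2 * √2 * L) by ring, log_mul (by positivity) (by positivity)]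
  have hlog_t : log (√2 * B * t) = log (√2 * B * T) + log (t / T) := by
    rw [← log_mul (by positivity) htT.ne', mul_assoc _ T, mul_div_cancel₀ _ hT.ne']
  have hratio_nonneg : 0 ≤ log (t / T) := log_nonneg ((one_le_div hT).mpr ht)
  have hratio_le : log (t / T) ≤ t / T - 1 := log_le_sub_one_of_pos htT
  have hlog_nonneg : 0 ≤ log (2 * √2 * L) :=
    log_nonneg (by nlinarith [one_le_sqrt.mpr one_le_two])
  have hpos : 0 < log (√2 * B * t) := by
    rw [hlog_t, hlog_T]; linarith
  rw [lt_div_iff₀ hpos]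
  have hgrowth : y * (t / T - 1) ≤ t - T := by
    have hyT : y ≤ T := by nlinarith
    rw [div_sub_one hT.ne', mul_div_assoc', div_le_iff₀ hT]
    nlinarith [sub_nonneg.mpr ht]
  calc y * log (√2 * B * t) = y * (L + log (2 * √2 * L)) + y * log (t / T) := by
        rw [hlog_t, hlog_T]; ring
    _ < y * (2 * L) + y * (t / T - 1) :=
        add_lt_add_of_lt_of_le (by gcongr; linarith [log_two_mul_sqrt_two_mul_lt_self hL])
          (by gcongr)
    _ ≤ t := by linarith

lemma one_lt_div_sub_sq {p p₁ : ℝ} (hp : 0 < p) (hpp : p < p₁) (hp1 : p₁ ≤ 1) :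
    1 < p₁ / (p₁ - p) ^ 2 := by
  rw [one_lt_div (pow_pos (sub_pos.2 hpp) 2)]
  nlinarith

/-- (Sufficiency of the stopping time `T*`, Appendix B.) Let `k ≥ 1`, `δ ∈ (0,1]`,
`0 < p < p₁ ≤ 1`. Set `x = p₁/(p₁−p)²` and
`t* = (592/3)·x·log((592/3)·sqrt(k/δ)·x)`. Then for every real `t ≥ t*`,
`t / log(2·sqrt(2k/δ)·t) > (296/3)·x`. -/
theorem tstar_sufficient (k : ℕ) (hk : 1 ≤ k) (δ : ℝ) (hδ0 : 0 < δ) (hδ1 : δ ≤ 1)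
    (p p₁ : ℝ) (hp : 0 < p) (hpp : p < p₁) (hp1 : p₁ ≤ 1) :
    ∀ t : ℝ,
      (592 / 3) * (p₁ / (p₁ - p) ^ 2) *
          Real.log ((592 / 3) * Real.sqrt ((k : ℝ) / δ) * (p₁ / (p₁ - p) ^ 2)) ≤ t →
      (296 / 3) * (p₁ / (p₁ - p) ^ 2) < t / Real.log (2 * Real.sqrt (2 * (k : ℝ) / δ) * t) := by
  intro t ht
  set x := p₁ / (p₁ - p) ^ 2
  set s := √((k : ℝ) / δ)
  have hx : 1 < x := one_lt_div_sub_sq hp hpp hp1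
  have hk' : (1 : ℝ) ≤ k := by exact_mod_cast hk
  have hs : 1 ≤ s := one_le_sqrt.mpr ((one_le_div hδ0).mpr (by linarith))
  have hBy : 2 * s * (296 / 3 * x) = 592 / 3 * s * x := by ring
  have hL : 5 ≤ log (2 * s * (296 / 3 * x)) := by
    rw [hBy, le_log_iff_exp_le (by positivity)]
    nlinarith [exp_five_lt, mul_le_mul hs hx.le zero_le_one (by positivity)]
  have hsqrt : √(2 * (k : ℝ) / δ) = √2 * s := by rw [mul_div_assoc, sqrt_mul zero_le_two]
  have key := lt_div_log_of_two_mul_log_le (t := t) (by positivity) (by positivity) hL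
    (by rw [hBy]; linarith)
  rwa [show √2 * (2 * s) * t = 2 * √(2 * (k : ℝ) / δ) * t by rw [hsqrt]; ring] at key
end
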